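/- A commutative ring R that is not local is a general ZPI-ring if and only if R is an n-OAF ring. -/

import Mathlib

/-!
Prime ideals are clearly `n`-OA ideals. Conversely, a non-local ring has nonunits `x`, `y` with
`x + y` a unit. If `I` is `(m+1)`-OA and `a₁⋯aₘ z ∈ I` with `z ∉ I`, then applying the
`(m+1)`-OA condition to `a₁⋯aₘ c z` gives `a₁⋯aₘ c ∈ I` for every nonunit `c`; taking `c = x`
and `c = y` and adding yields `a₁⋯aₘ ∈ I`, so `I` is `m`-OA. Descending to `m = 1` shows that
every `n`-OA ideal is prime, so `n`-OA factorizations and prime factorizations coincide.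
-/

/-- A proper ideal `I` is an `n`-OA ideal (`n`-`1`-absorbing prime) if whenever a product of
`n+1` nonunits lies in `I`, then the product of the first `n` of them lies in `I` or the last
one lies in `I`. -/
def IsNOAIdeal {R : Type*} [CommRing R] (n : ℕ) (I : Ideal R) : Prop :=
  I ≠ ⊤ ∧ ∀ a : Fin (n + 1) → R, (∀ i, ¬IsUnit (a i)) → (∏ i, a i) ∈ I →
    (∏ i : Fin n, a i.castSucc) ∈ I ∨ a (Fin.last n) ∈ I

/-- An ideal has an `n`-OA-factorization if it is a product of finitely many `n`-OA ideals. -/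
def HasNOAFactorization {R : Type*} [CommRing R] (n : ℕ) (I : Ideal R) : Prop :=
  ∃ (m : ℕ) (J : Fin m → Ideal R), 0 < m ∧ (∀ i, IsNOAIdeal n (J i)) ∧ I = ∏ i, J i

/-- A ring is an `n`-OAF ring if every proper ideal has an `n`-OA-factorization. -/
def IsNOAFRing (R : Type*) [CommRing R] (n : ℕ) : Prop :=
  ∀ I : Ideal R, I ≠ ⊤ → HasNOAFactorization n I

/-- A general ZPI-ring: every proper ideal is a finite product of prime ideals. -/
def IsGeneralZPIRing (R : Type*) [CommRing R] : Prop :=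
  ∀ I : Ideal R, I ≠ ⊤ →
    ∃ (m : ℕ) (J : Fin m → Ideal R), 0 < m ∧ (∀ i, (J i).IsPrime) ∧ I = ∏ i, J i

section

variable {R : Type*} [CommRing R]

lemma exists_not_isUnit_add_isUnit [Nontrivial R] (h : ¬IsLocalRing R) :
    ∃ x y : R, ¬IsUnit x ∧ ¬IsUnit y ∧ IsUnit (x + y) := by
  contrapose! h
  exact IsLocalRing.of_isUnit_or_isUnit_of_isUnit_add fun a b hab => by
    by_contra! hab'
    exact h a b hab'.1 hab'.2 hab

lemma Ideal.IsPrime.isNOAIdeal {I : Ideal R} (h : I.IsPrime) (n : ℕ) : IsNOAIdeal n I := by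
  refine ⟨h.ne_top, fun a _ hprod => ?_⟩
  obtain ⟨i, -, hi⟩ := h.prod_mem_iff.mp hprod
  induction i using Fin.lastCases with
  | last => exact Or.inr hi
  | cast j => exact Or.inl (h.prod_mem_iff.mpr ⟨j, Finset.mem_univ j, hi⟩)

namespace IsNOAIdeal

variable {I : Ideal R}

lemma mul_mem_or_mem {n : ℕ} (h : IsNOAIdeal n I) {f : Fin n → R} {z : R}
    (hf : ∀ i, ¬IsUnit (f i)) (hz : ¬IsUnit z) (hfz : (∏ i, f i) * z ∈ I) :
    (∏ i, f i) ∈ I ∨ z ∈ I := by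
  have hsnoc := h.2 (Fin.snoc f z) (Fin.lastCases (by simpa) (by simpa)) (by
    simpa [Fin.prod_univ_castSucc] using hfz)
  simpa using hsnoc

lemma mul_mem_of_mul_mem_of_notMem {m : ℕ} (h : IsNOAIdeal (m + 1) I) {f : Fin m → R}
    {z c : R} (hf : ∀ i, ¬IsUnit (f i)) (hz : ¬IsUnit z) (hzI : z ∉ I)
    (hfz : (∏ i, f i) * z ∈ I) (hc : ¬IsUnit c) : (∏ i, f i) * c ∈ I := by
  have hfcz : (∏ i, Fin.snoc f c i) * z ∈ I := by
    simpa [Fin.prod_univ_castSucc, mul_right_comm _ c z] using I.mul_mem_right c hfz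
  have hsnoc : ∀ i, ¬IsUnit (Fin.snoc (α := fun _ => R) f c i) :=
    Fin.lastCases (by simpa) (by simpa)
  simpa [Fin.prod_univ_castSucc, hzI] using h.mul_mem_or_mem hsnoc hz hfcz

lemma of_succ {m : ℕ} {x y : R} (hx : ¬IsUnit x) (hy : ¬IsUnit y) (hxy : IsUnit (x + y))
    (h : IsNOAIdeal (m + 1) I) : IsNOAIdeal m I := by
  refine ⟨h.1, fun a ha hprod => ?_⟩
  rw [Fin.prod_univ_castSucc] at hprod
  refine or_iff_not_imp_right.mpr fun hzI => ?_
  have hcast : ∀ i, ¬IsUnit (a (Fin.castSucc i)) := fun i => ha _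
  have hfx := h.mul_mem_of_mul_mem_of_notMem hcast (ha _) hzI hprod hx
  have hfy := h.mul_mem_of_mul_mem_of_notMem hcast (ha _) hzI hprod hy
  rw [← I.mul_unit_mem_iff_mem hxy, mul_add]
  exact I.add_mem hfx hfy

lemma isPrime_of_one (h : IsNOAIdeal 1 I) : I.IsPrime := by
  refine ⟨h.1, fun {a b} hab => ?_⟩
  by_cases ha : IsUnit a
  · exact Or.inr ((I.unit_mul_mem_iff_mem ha).mp hab)
  by_cases hb : IsUnit b
  · exact Or.inl ((I.mul_unit_mem_iff_mem hb).mp hab)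
  simpa using h.mul_mem_or_mem (f := fun _ => a) (fun _ => ha) hb (by simpa using hab)

lemma isPrime (hnl : ¬IsLocalRing R) {n : ℕ} (hn : 0 < n) (h : IsNOAIdeal n I) :
    I.IsPrime := by
  have : Nontrivial R := nontrivial_of_ne 0 1 fun h01 => h.1 (I.eq_top_of_isUnit_mem
    (h01 ▸ I.zero_mem) isUnit_one)
  obtain ⟨x, y, hx, hy, hxy⟩ := exists_not_isUnit_add_isUnit hnl
  obtain ⟨k, rfl⟩ := Nat.exists_eq_add_of_lt hn
  clear hn
  induction k with
  | zero => exact h.isPrime_of_one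
  | succ k ih => exact ih (h.of_succ hx hy hxy)

end IsNOAIdeal

end

theorem stmt13_general {R : Type*} [CommRing R] (hnl : ¬IsLocalRing R)
    (n : ℕ) (hn : 0 < n) :
    IsGeneralZPIRing R ↔ IsNOAFRing R n := by
  constructor
  · intro hz I hI
    obtain ⟨m, J, hm, hp, hIJ⟩ := hz I hI
    exact ⟨m, J, hm, fun i => (hp i).isNOAIdeal n, hIJ⟩
  · intro hf I hI
    obtain ⟨m, J, hm, hp, hIJ⟩ := hf I hI
    exact ⟨m, J, hm, fun i => (hp i).isPrime hnl hn, hIJ⟩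

theorem stmt13 {R : Type*} [CommRing R] [Nontrivial R] (hnl : ¬IsLocalRing R)
    (n : ℕ) (hn : 0 < n) :
    IsGeneralZPIRing R ↔ IsNOAFRing R n :=
  stmt13_general hnl n hn
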